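/- Let m ≥ 2 and N ≥ 1 be integers, let 0 < ν ≤ 1, and let v_0, …, v_{m−1} be distinct real numbers with ν ≤ v_j ≤ 1 for all j. Define Ψ_N(t) = (1−t²)/(1−t^{2/N}) for t ∈ (0,1) and Ψ_N(1) = N, let W_N be the (mN)×m matrix with entries (W_N)_{ij} = v_j^{(i−1)/N} for 1 ≤ i ≤ mN and 0 ≤ j ≤ m−1, and set α̃ = e^{−1/2} m^{−(m−1)/2} ∏_{0≤j<k≤m−1} |v_j − v_k|. Then for every x ∈ ℂ^m, α̃² Ψ_N(ν) ‖x‖² ≤ ‖W_N x‖² ≤ m² N ‖x‖². -/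

import Mathlib

open MeasureTheory Matrix
open scoped Real BigOperators

noncomputable section

/-- Fourier transform normalized as `f̂ ξ = ∫ f t · e^{-i t ξ} dt`. -/
def FT (f : ℝ → ℂ) (ξ : ℝ) : ℂ :=
  ∫ t : ℝ, Complex.exp (-(Complex.I * t * ξ)) * f t

/-- The (real-valued on `[-c,c]`) values of `φ̂` for a kernel of the class `Φ_c`. -/
def phihat (φ : ℝ → ℂ) (ξ : ℝ) : ℝ := (FT φ ξ).re

/-- The class `Φ_c`: `φ ∈ L¹`, `φ̂(0) = 1` and `κ ≤ φ̂ ≤ 1` on `[-c,c]` for some `κ > 0`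
(in particular `φ̂` is real-valued there). -/
def InPhi (c : ℝ) (φ : ℝ → ℂ) : Prop :=
  Integrable φ ∧ FT φ 0 = 1 ∧
    ∃ κ : ℝ, 0 < κ ∧ ∀ ξ : ℝ, |ξ| ≤ c →
      FT φ ξ = ((FT φ ξ).re : ℂ) ∧ κ ≤ (FT φ ξ).re ∧ (FT φ ξ).re ≤ 1

/-- `2c`-periodization of `g·1_{[-c,c)}`: for every `x` there is a unique `k ∈ ℤ` with
`x - 2ck ∈ [-c,c)`, namely `k = ⌊(x+c)/(2c)⌋`. -/
def per (c : ℝ) (g : ℝ → ℝ) (x : ℝ) : ℝ :=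
  g (x - 2*c*(⌊(x + c)/(2*c)⌋ : ℝ))

/-- `2c`-periodization of a complex-valued `g·1_{[-c,c)}`. -/
def perC (c : ℝ) (g : ℝ → ℂ) (x : ℝ) : ℂ :=
  g (x - 2*c*(⌊(x + c)/(2*c)⌋ : ℝ))

/-- The sampled diffusion matrix `ℬ_m(ξ)`. -/
def Bmat (c : ℝ) (g : ℝ → ℝ) (m : ℕ) (ξ : ℝ) : Matrix (Fin m) (Fin m) ℂ :=
  Matrix.of fun j k : Fin m =>
    (((∫ t in (0:ℝ)..1,
        per c g (2*c/(m:ℝ)*(ξ + (j.val : ℝ))) ^ t *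
          per c g (2*c/(m:ℝ)*(ξ + (k.val : ℝ))) ^ t) : ℝ) : ℂ)

/-- The value `f_t(x)` of the evolved signal, computed by Fourier inversion from
`f̂_t = ĝ^t·f̂` where `F = f̂` is supported in `[-c,c]`. -/
def heatSample (c : ℝ) (g : ℝ → ℝ) (F : ℝ → ℂ) (t x : ℝ) : ℂ :=
  ((1/(2*Real.pi) : ℝ) : ℂ) *
    ∫ ξ in (-c)..c, F ξ * (((g ξ) ^ t : ℝ) : ℂ) * Complex.exp (Complex.I * x * ξ)

/-- The vectorization `𝐟(ξ) = ((f̂)_p(2c(ξ+j)/m))_{j=0,…,m-1}`. -/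
def fvec (c : ℝ) (m : ℕ) (F : ℝ → ℂ) (ξ : ℝ) : Fin m → ℂ :=
  fun j => perC c F (2*c/(m:ℝ)*(ξ + (j.val : ℝ)))

/-- `Ψ_N(t) = (1-t²)/(1-t^{2/N})` for `t ≠ 1`, `Ψ_N(1) = N`. -/
def PsiFn (N : ℕ) (t : ℝ) : ℝ :=
  if t = 1 then (N : ℝ) else (1 - t^2)/(1 - t ^ ((2:ℝ)/(N:ℝ)))

/-- `∏_{0 ≤ j < k ≤ m-1} |v_j - v_k|`. -/
def pairProd (m : ℕ) (v : Fin m → ℝ) : ℝ :=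
  ∏ p ∈ Finset.univ.filter (fun p : Fin m × Fin m => p.1 < p.2), |v p.1 - v p.2|

/-- `σ² = Σ_j σ_j²` with `σ_j² = Σ_{k=0}^{m-1} v_j^{2k}`. -/
def sigmaSq (m : ℕ) (v : Fin m → ℝ) : ℝ :=
  ∑ j : Fin m, ∑ k : Fin m, v j ^ (2*k.val)

/-- The `(mN) × m` Vandermonde-type matrix `W_N` with entries `v_j^{(i-1)/N}`, `1 ≤ i ≤ mN`. -/
def VandW (m N : ℕ) (v : Fin m → ℝ) : Matrix (Fin (m*N)) (Fin m) ℂ :=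
  Matrix.of fun i j => (((v j ^ ((i.val : ℝ)/(N : ℝ))) : ℝ) : ℂ)

/-- `Δ_m(ξ) = ∏_{0≤j<k≤m-1} |(φ̂)_p(2c(ξ+j)/m) - (φ̂)_p(2c(ξ+k)/m)|`. -/
def DeltaM (c : ℝ) (g : ℝ → ℝ) (m : ℕ) (ξ : ℝ) : ℝ :=
  ∏ p ∈ Finset.univ.filter (fun p : Fin m × Fin m => p.1 < p.2),
    |per c g (2*c/(m:ℝ)*(ξ + (p.1.val : ℝ))) - per c g (2*c/(m:ℝ)*(ξ + (p.2.val : ℝ)))|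

/-- `(sinc(c·) * φ_t)(x) = (1/(2c)) ∫_{-c}^{c} φ̂(ξ)^t e^{ixξ} dξ`. -/
def sincConv (c : ℝ) (g : ℝ → ℝ) (t x : ℝ) : ℂ :=
  ((1/(2*c) : ℝ) : ℂ) *
    ∫ ξ in (-c)..c, (((g ξ) ^ t : ℝ) : ℂ) * Complex.exp (Complex.I * x * ξ)

/-- `c_{φ,L} = 2(κ^{2L} - 1)/(π² ln κ)`. -/
def cPhiL (κ L : ℝ) : ℝ := 2*(κ ^ (2*L) - 1)/(Real.pi^2 * Real.log κ)

/-- Legendre polynomial `P_k` via Rodrigues' formula. -/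
def legendreP (k : ℕ) : Polynomial ℝ :=
  Polynomial.C (1/((2:ℝ)^k * (Nat.factorial k : ℝ))) *
    ((fun q : Polynomial ℝ => Polynomial.derivative q)^[k] ((Polynomial.X^2 - 1)^k))

/-- Lower Beurling density. -/
def lowerDensity (Λ : Set ℝ) : ℝ :=
  Filter.liminf
    (fun r : ℝ => ⨅ x : ℝ, ((Λ ∩ Set.Icc (x - r) (x + r)).ncard : ℝ)/(2*r)) Filter.atTop

/-- Upper Beurling density. -/
def upperDensity (Λ : Set ℝ) : ℝ :=
  Filter.limsup
    (fun r : ℝ => ⨆ x : ℝ, ((Λ ∩ Set.Icc (x - r) (x + r)).ncard : ℝ)/(2*r)) Filter.atTop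

/-- Fourier transform of the Gaussian heat kernel at time 1: `φ̂(ξ) = e^{-σ²ξ²}`. -/
def GaussHat (σ : ℝ) (ξ : ℝ) : ℝ := Real.exp (-(σ^2 * ξ^2))

/-!
Grouping the rows of `W_N` by their index modulo `N` gives
`‖W_N x‖² = ∑_{s<N} ‖Vᵀ D_s x‖²`, where `V` is the Vandermonde matrix of `v` and
`D_s = diag(v_j^{s/N})`. The eigenvalues of `(Vᵀ)ᴴ Vᵀ` multiply to `|det V|² = ∏_{j<k} |v_j - v_k|²`
and add up to its trace `σ² ≤ m²`, so AM-GM on all eigenvalues but the smallest one bounds the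
latter below by `∏_{j<k} |v_j - v_k|² / (m² / (m-1))^{m-1} ≥ α̃²`, using `(1 + 1/n)^n ≤ e`.
Since `‖D_s x‖² ≥ ν^{2s/N} ‖x‖²` and `∑_{s<N} ν^{2s/N} = Ψ_N(ν)`, the lower bound follows; the upper
bound holds because every entry of `W_N` has modulus at most `1`.
-/

open Finset

section SpectralBounds

variable {n : Type*} [Fintype n]

lemma star_dotProduct_self_eq_sum_sq_norm (x : n → ℂ) :
    star x ⬝ᵥ x = ((∑ i, ‖x i‖ ^ 2 : ℝ) : ℂ) := by
  push_cast
  exact sum_congr rfl fun i _ => Complex.conj_mul' (x i)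

variable [DecidableEq n]

lemma sum_sq_norm_unitary_mulVec {U : Matrix n n ℂ} (hU : U ∈ unitaryGroup n ℂ) (x : n → ℂ) :
    ∑ i, ‖(U *ᵥ x) i‖ ^ 2 = ∑ i, ‖x i‖ ^ 2 := by
  have h : star (U *ᵥ x) ⬝ᵥ (U *ᵥ x) = star x ⬝ᵥ x := by
    rw [star_mulVec, dotProduct_mulVec, vecMul_vecMul, ← star_eq_conjTranspose,
      (mem_unitaryGroup_iff').mp hU, vecMul_one]
  rw [star_dotProduct_self_eq_sum_sq_norm, star_dotProduct_self_eq_sum_sq_norm] at h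
  exact_mod_cast h

lemma Matrix.IsHermitian.re_star_dotProduct_mulVec {A : Matrix n n ℂ} (hA : A.IsHermitian)
    (x : n → ℂ) :
    (star x ⬝ᵥ (A *ᵥ x)).re =
      ∑ i, hA.eigenvalues i * ‖(star (hA.eigenvectorUnitary : Matrix n n ℂ) *ᵥ x) i‖ ^ 2 := by
  have hx : star x ᵥ* (hA.eigenvectorUnitary : Matrix n n ℂ) =
      star (star (hA.eigenvectorUnitary : Matrix n n ℂ) *ᵥ x) := by
    rw [star_mulVec, star_eq_conjTranspose, conjTranspose_conjTranspose]
  conv_lhs => rw [hA.spectral_theorem, Unitary.conjStarAlgAut_apply]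
  rw [← mulVec_mulVec, ← mulVec_mulVec, dotProduct_mulVec, hx]
  generalize star (hA.eigenvectorUnitary : Matrix n n ℂ) *ᵥ x = y
  simp only [mulVec_diagonal, dotProduct, Pi.star_apply, Function.comp_apply, Complex.re_sum]
  refine sum_congr rfl fun i _ => ?_
  rw [mul_left_comm, Complex.star_def, Complex.conj_mul']
  simp [← Complex.ofReal_pow]

lemma Matrix.IsHermitian.mul_sum_sq_norm_le {A : Matrix n n ℂ} (hA : A.IsHermitian) {a K : ℝ}
    (h : ∀ i, a ≤ K * hA.eigenvalues i) (x : n → ℂ) :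
    a * ∑ i, ‖x i‖ ^ 2 ≤ K * (star x ⬝ᵥ (A *ᵥ x)).re := by
  rw [hA.re_star_dotProduct_mulVec, ← sum_sq_norm_unitary_mulVec
    (star hA.eigenvectorUnitary).2 x, mul_sum, mul_sum]
  refine sum_le_sum fun i _ => ?_
  rw [← mul_assoc]
  exact mul_le_mul_of_nonneg_right (h i) (sq_nonneg _)

end SpectralBounds

lemma Finset.prod_le_sum_div_card_pow {ι : Type*} (s : Finset ι) {f : ι → ℝ}
    (hf : ∀ i ∈ s, 0 ≤ f i) : ∏ i ∈ s, f i ≤ ((∑ i ∈ s, f i) / #s) ^ #s := by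
  rcases s.eq_empty_or_nonempty with rfl | hs
  · simp
  have hcard : (0 : ℝ) < #s := by exact_mod_cast hs.card_pos
  have amgm := Real.geom_mean_le_arith_mean s (fun _ => 1) f (fun _ _ => zero_le_one)
    (by simpa using hcard) hf
  simp only [Real.rpow_one, sum_const, nsmul_eq_mul, mul_one, one_mul] at amgm
  calc ∏ i ∈ s, f i = ((∏ i ∈ s, f i) ^ ((#s : ℝ)⁻¹)) ^ #s := by
        rw [← Real.rpow_natCast, ← Real.rpow_mul (prod_nonneg hf),
          inv_mul_cancel₀ hcard.ne', Real.rpow_one]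
    _ ≤ ((∑ i ∈ s, f i) / #s) ^ #s := by gcongr; exact Real.rpow_nonneg (prod_nonneg hf) _

-- AM-GM applied to all factors but `f i`.
lemma prod_le_sum_div_pow_mul {ι : Type*} [Fintype ι] [DecidableEq ι] {f : ι → ℝ}
    (hf : ∀ i, 0 ≤ f i) (i : ι) :
    ∏ j, f j ≤ ((∑ j, f j) / (Fintype.card ι - 1 : ℕ)) ^ (Fintype.card ι - 1) * f i := by
  have hcard : #(univ.erase i) = Fintype.card ι - 1 := by simp [card_erase_of_mem]
  rw [← mul_prod_erase univ f (mem_univ i), mul_comm]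
  gcongr
  · exact hf i
  calc ∏ j ∈ univ.erase i, f j
      ≤ ((∑ j ∈ univ.erase i, f j) / #(univ.erase i)) ^ #(univ.erase i) :=
        (univ.erase i).prod_le_sum_div_card_pow fun j _ => hf j
    _ ≤ ((∑ j, f j) / (Fintype.card ι - 1 : ℕ)) ^ (Fintype.card ι - 1) := by
        rw [hcard]
        gcongr
        · exact div_nonneg (sum_nonneg fun j _ => hf j) (Nat.cast_nonneg _)
        · exact fun j _ _ => hf j
        · exact subset_univ _

/-- A Guggenheimer-type lower bound for the smallest singular value of a square matrix. -/
lemma Matrix.sq_norm_det_mul_sum_sq_norm_le {n : Type*} [Fintype n] [DecidableEq n]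
    (B : Matrix n n ℂ) (x : n → ℂ) :
    ‖B.det‖ ^ 2 * ∑ i, ‖x i‖ ^ 2 ≤
      ((Bᴴ * B).trace.re / (Fintype.card n - 1 : ℕ)) ^ (Fintype.card n - 1) *
        ∑ i, ‖(B *ᵥ x) i‖ ^ 2 := by
  have hA : (Bᴴ * B).IsHermitian := isHermitian_conjTranspose_mul_self B
  have hdet : ∏ i, hA.eigenvalues i = ‖B.det‖ ^ 2 := by
    have h := hA.det_eq_prod_eigenvalues
    rw [det_mul, det_conjTranspose, Complex.star_def, Complex.conj_mul'] at h
    exact Complex.ofReal_injective (by push_cast; exact h.symm)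
  have htrace : ∑ i, hA.eigenvalues i = (Bᴴ * B).trace.re := by
    rw [hA.trace_eq_sum_eigenvalues, Complex.re_sum]
    rfl
  have hquad : (star x ⬝ᵥ ((Bᴴ * B) *ᵥ x)).re = ∑ i, ‖(B *ᵥ x) i‖ ^ 2 := by
    rw [← mulVec_mulVec, dotProduct_mulVec, ← star_mulVec, star_dotProduct_self_eq_sum_sq_norm,
      Complex.ofReal_re]
  rw [← hquad, ← hdet, ← htrace]
  exact hA.mul_sum_sq_norm_le
    (prod_le_sum_div_pow_mul (eigenvalues_conjTranspose_mul_self_nonneg B) ·) x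

lemma sq_div_pred_pow_le_exp_one_mul (m : ℕ) :
    ((m : ℝ) ^ 2 / (m - 1 : ℕ)) ^ (m - 1) ≤ Real.exp 1 * (m : ℝ) ^ (m - 1) := by
  obtain _ | _ | n := m
  · simp
  · simp
  have hbase : ((n + 2 : ℕ) : ℝ) ^ 2 / (n + 2 - 1 : ℕ) =
      (1 + ((n + 1 : ℕ) : ℝ)⁻¹) * (n + 2 : ℕ) := by
    push_cast [Nat.add_sub_cancel]
    field_simp
    ring
  rw [hbase, mul_pow]
  gcongr
  exact Real.one_add_inv_pow_le_exp

lemma pairProd_eq_abs_det_vandermonde {m : ℕ} (v : Fin m → ℝ) :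
    pairProd m v = |(vandermonde v).det| := by
  rw [det_vandermonde, abs_prod, pairProd, prod_filter, ← univ_product_univ, prod_product]
  refine prod_congr rfl fun i _ => ?_
  rw [abs_prod, ← prod_filter]
  exact prod_congr (by ext; simp) fun j _ => abs_sub_comm _ _

lemma norm_det_transpose_vandermonde_ofReal {m : ℕ} (v : Fin m → ℝ) :
    ‖(vandermonde fun j => (v j : ℂ))ᵀ.det‖ = pairProd m v := by
  rw [det_transpose, pairProd_eq_abs_det_vandermonde, det_vandermonde, det_vandermonde,
    ← Real.norm_eq_abs, ← Complex.norm_real]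
  push_cast
  rfl

lemma re_trace_conjTranspose_mul_vandermonde_ofReal {m : ℕ} (v : Fin m → ℝ) :
    (((vandermonde fun j => (v j : ℂ))ᵀ)ᴴ * (vandermonde fun j => (v j : ℂ))ᵀ).trace.re =
      sigmaSq m v := by
  simp only [trace, diag_apply, mul_apply, conjTranspose_apply, transpose_apply,
    vandermonde_apply, Complex.re_sum, sigmaSq]
  refine sum_congr rfl fun j _ => sum_congr rfl fun k _ => ?_
  rw [Complex.star_def, Complex.conj_mul', ← Complex.ofReal_pow, Complex.ofReal_re, norm_pow,
    Complex.norm_real, Real.norm_eq_abs, pow_right_comm, sq_abs, pow_mul]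

lemma sigmaSq_nonneg {m : ℕ} (v : Fin m → ℝ) : 0 ≤ sigmaSq m v :=
  sum_nonneg fun j _ => sum_nonneg fun k _ => by rw [pow_mul]; positivity

lemma sigmaSq_le {m : ℕ} {v : Fin m → ℝ} (hv : ∀ j, |v j| ≤ 1) : sigmaSq m v ≤ (m : ℝ) ^ 2 := by
  calc sigmaSq m v ≤ ∑ _j : Fin m, ∑ _k : Fin m, (1 : ℝ) := by
        refine sum_le_sum fun j _ => sum_le_sum fun k _ => ?_
        rw [pow_mul]
        exact pow_le_one₀ (sq_nonneg _) (sq_le_one_iff_abs_le_one _ |>.mpr (hv j))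
    _ = (m : ℝ) ^ 2 := by simp [sq]

lemma sq_pairProd_mul_sum_sq_norm_le {m : ℕ} {v : Fin m → ℝ} (hv : ∀ j, |v j| ≤ 1)
    (y : Fin m → ℂ) :
    pairProd m v ^ 2 * ∑ j, ‖y j‖ ^ 2 ≤
      Real.exp 1 * (m : ℝ) ^ (m - 1) *
        ∑ q, ‖((vandermonde fun j => (v j : ℂ))ᵀ *ᵥ y) q‖ ^ 2 := by
  have h := sq_norm_det_mul_sum_sq_norm_le (vandermonde fun j => (v j : ℂ))ᵀ y
  rw [norm_det_transpose_vandermonde_ofReal, re_trace_conjTranspose_mul_vandermonde_ofReal,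
    Fintype.card_fin] at h
  refine h.trans (mul_le_mul_of_nonneg_right ?_ (sum_nonneg fun q _ => sq_nonneg _))
  calc (sigmaSq m v / (m - 1 : ℕ)) ^ (m - 1) ≤ ((m : ℝ) ^ 2 / (m - 1 : ℕ)) ^ (m - 1) := by
        gcongr
        · exact div_nonneg (sigmaSq_nonneg v) (Nat.cast_nonneg _)
        · exact sigmaSq_le hv
    _ ≤ Real.exp 1 * (m : ℝ) ^ (m - 1) := sq_div_pred_pow_le_exp_one_mul m

lemma exp_neg_half_mul_rpow_sq_mul {m : ℕ} (hm : 0 < m) :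
    (Real.exp (-(1 / 2)) * (m : ℝ) ^ (-(((m : ℝ) - 1) / 2))) ^ 2 *
      (Real.exp 1 * (m : ℝ) ^ (m - 1)) = 1 := by
  have hm' : (0 : ℝ) < m := Nat.cast_pos.mpr hm
  rw [mul_pow, ← Real.exp_nat_mul, ← Real.rpow_natCast _ 2, ← Real.rpow_mul hm'.le,
    ← Real.rpow_natCast _ (m - 1), Nat.cast_pred hm]
  rw [show ((2 : ℕ) : ℝ) * -(1 / 2) = -1 by norm_num,
    show -(((m : ℝ) - 1) / 2) * ((2 : ℕ) : ℝ) = -((m : ℝ) - 1) by push_cast; ring,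
    Real.rpow_neg hm'.le, Real.exp_neg]
  field_simp

lemma sq_mul_sum_sq_norm_le_transpose_vandermonde {m : ℕ} (hm : 0 < m) {v : Fin m → ℝ}
    (hv : ∀ j, |v j| ≤ 1) (y : Fin m → ℂ) :
    (Real.exp (-(1 / 2)) * (m : ℝ) ^ (-(((m : ℝ) - 1) / 2)) * pairProd m v) ^ 2 *
        ∑ j, ‖y j‖ ^ 2 ≤
      ∑ q, ‖((vandermonde fun j => (v j : ℂ))ᵀ *ᵥ y) q‖ ^ 2 := by
  set c := Real.exp (-(1 / 2)) * (m : ℝ) ^ (-(((m : ℝ) - 1) / 2))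
  calc (c * pairProd m v) ^ 2 * ∑ j, ‖y j‖ ^ 2
        = c ^ 2 * (pairProd m v ^ 2 * ∑ j, ‖y j‖ ^ 2) := by ring
    _ ≤ c ^ 2 * (Real.exp 1 * (m : ℝ) ^ (m - 1) *
          ∑ q, ‖((vandermonde fun j => (v j : ℂ))ᵀ *ᵥ y) q‖ ^ 2) := by
        gcongr c ^ 2 * ?_
        exact sq_pairProd_mul_sum_sq_norm_le hv y
    _ = ∑ q, ‖((vandermonde fun j => (v j : ℂ))ᵀ *ᵥ y) q‖ ^ 2 := by
        rw [← mul_assoc, exp_neg_half_mul_rpow_sq_mul hm, one_mul]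

lemma PsiFn_eq_sum_rpow (N : ℕ) {ν : ℝ} (hν : 0 < ν) :
    PsiFn N ν = ∑ s : Fin N, ν ^ (2 * ((s : ℝ) / N)) := by
  by_cases h1 : ν = 1
  · simp [PsiFn, h1]
  rcases N.eq_zero_or_pos with rfl | hN
  · simp [PsiFn, h1]
  set r := ν ^ ((2 : ℝ) / N)
  have hterm : ∀ s : ℕ, ν ^ (2 * ((s : ℝ) / N)) = r ^ s := fun s => by
    rw [← Real.rpow_natCast, ← Real.rpow_mul hν.le]
    ring_nf
  have hrN : r ^ N = ν ^ 2 := by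
    rw [← hterm, div_self (by positivity), mul_one, Real.rpow_two]
  have hr : r ≠ 1 := fun h => h1 <| by
    rwa [h, one_pow, eq_comm, pow_eq_one_iff_of_nonneg hν.le two_ne_zero] at hrN
  simp only [hterm]
  rw [Fin.sum_univ_eq_sum_range (r ^ ·), geom_sum_eq hr, hrN, PsiFn, if_neg h1,
    ← neg_div_neg_eq, neg_sub, neg_sub]

lemma VandW_mulVec_finProdFinEquiv {m N : ℕ} {v : Fin m → ℝ} (hv : ∀ j, 0 < v j)
    (x : Fin m → ℂ) (q : Fin m) (s : Fin N) :
    (VandW m N v *ᵥ x) (finProdFinEquiv (q, s)) =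
      ((vandermonde fun j => (v j : ℂ))ᵀ *ᵥ
        (diagonal (fun j => ((v j ^ ((s : ℝ) / N) : ℝ) : ℂ)) *ᵥ x)) q := by
  have hN : (N : ℝ) ≠ 0 := Nat.cast_ne_zero.mpr s.pos.ne'
  simp only [mulVec, dotProduct, VandW, of_apply, transpose_apply, vandermonde_apply,
    diagonal_apply, ite_mul, zero_mul, sum_ite_eq, mem_univ, if_true, finProdFinEquiv_apply_val]
  refine sum_congr rfl fun j _ => ?_
  have hexp : ((s + N * q : ℕ) : ℝ) / N = q + s / N := by
    push_cast
    field_simp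
    ring
  rw [hexp, Real.rpow_add (hv j), Real.rpow_natCast]
  push_cast
  ring

lemma sum_sq_norm_VandW_mulVec {m N : ℕ} {v : Fin m → ℝ} (hv : ∀ j, 0 < v j)
    (x : Fin m → ℂ) :
    ∑ i, ‖(VandW m N v *ᵥ x) i‖ ^ 2 =
      ∑ s : Fin N, ∑ q, ‖((vandermonde fun j => (v j : ℂ))ᵀ *ᵥ
        (diagonal (fun j => ((v j ^ ((s : ℝ) / N) : ℝ) : ℂ)) *ᵥ x)) q‖ ^ 2 := by
  rw [← finProdFinEquiv.sum_comp, Fintype.sum_prod_type, sum_comm]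
  simp only [VandW_mulVec_finProdFinEquiv hv]

lemma rpow_mul_sum_sq_norm_le_diagonal_mulVec {ι : Type*} [Fintype ι] [DecidableEq ι]
    {ν : ℝ} (hν : 0 < ν) {v : ι → ℝ} (hv : ∀ j, ν ≤ v j) {t : ℝ} (ht : 0 ≤ t) (x : ι → ℂ) :
    ν ^ (2 * t) * ∑ j, ‖x j‖ ^ 2 ≤
      ∑ j, ‖(diagonal (fun j => ((v j ^ t : ℝ) : ℂ)) *ᵥ x) j‖ ^ 2 := by
  rw [mul_sum]
  refine sum_le_sum fun j _ => ?_
  rw [mulVec_diagonal, norm_mul, mul_pow, Complex.norm_real, Real.norm_eq_abs, sq_abs,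
    mul_comm 2 t, Real.rpow_mul hν.le, Real.rpow_two]
  gcongr
  exact hv j

lemma sum_sq_norm_mulVec_le {ι κ : Type*} [Fintype ι] [Fintype κ] {A : Matrix ι κ ℂ}
    (hA : ∀ i j, ‖A i j‖ ≤ 1) (x : κ → ℂ) :
    ∑ i, ‖(A *ᵥ x) i‖ ^ 2 ≤ Fintype.card ι * Fintype.card κ * ∑ j, ‖x j‖ ^ 2 := by
  have hrow : ∀ i, ‖(A *ᵥ x) i‖ ^ 2 ≤ Fintype.card κ * ∑ j, ‖x j‖ ^ 2 := fun i =>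
    calc ‖(A *ᵥ x) i‖ ^ 2 ≤ (∑ j, ‖x j‖) ^ 2 := by
          gcongr
          refine (norm_sum_le _ _).trans (sum_le_sum fun j _ => ?_)
          rw [norm_mul]
          exact mul_le_of_le_one_left (norm_nonneg _) (hA i j)
      _ ≤ Fintype.card κ * ∑ j, ‖x j‖ ^ 2 := sq_sum_le_card_mul_sum_sq
  calc ∑ i, ‖(A *ᵥ x) i‖ ^ 2 ≤ ∑ _i : ι, Fintype.card κ * ∑ j, ‖x j‖ ^ 2 :=
        sum_le_sum fun i _ => hrow i
    _ = _ := by rw [sum_const, card_univ, nsmul_eq_mul, mul_assoc]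

lemma norm_VandW_apply_le_one {m N : ℕ} {v : Fin m → ℝ} (hv : ∀ j, 0 ≤ v j ∧ v j ≤ 1)
    (i : Fin (m * N)) (j : Fin m) : ‖VandW m N v i j‖ ≤ 1 := by
  rw [VandW, of_apply, Complex.norm_real, Real.norm_eq_abs,
    abs_of_nonneg (Real.rpow_nonneg (hv j).1 _)]
  exact Real.rpow_le_one (hv j).1 (hv j).2 (by positivity)

theorem stmt2_general (m N : ℕ) (hm : 2 ≤ m)
    (ν : ℝ) (hν0 : 0 < ν)
    (v : Fin m → ℝ)
    (hbd : ∀ j, ν ≤ v j ∧ v j ≤ 1) (x : Fin m → ℂ) :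
    (Real.exp (-(1/2)) * (m:ℝ) ^ (-(((m:ℝ)-1)/2)) * pairProd m v)^2 * PsiFn N ν *
        (∑ j, ‖x j‖^2)
      ≤ ∑ i, ‖(VandW m N v *ᵥ x) i‖^2
    ∧ ∑ i, ‖(VandW m N v *ᵥ x) i‖^2 ≤ (m:ℝ)^2 * (N:ℝ) * (∑ j, ‖x j‖^2) := by
  have hv : ∀ j, 0 < v j := fun j => hν0.trans_le (hbd j).1
  refine ⟨?_, ?_⟩
  · rw [sum_sq_norm_VandW_mulVec hv, PsiFn_eq_sum_rpow N hν0, mul_assoc, sum_mul, mul_sum]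
    refine sum_le_sum fun s _ => ?_
    refine (mul_le_mul_of_nonneg_left (rpow_mul_sum_sq_norm_le_diagonal_mulVec hν0
      (fun j => (hbd j).1) (by positivity) x) (sq_nonneg _)).trans ?_
    exact sq_mul_sum_sq_norm_le_transpose_vandermonde (by omega)
      (fun j => (abs_of_pos (hv j)).trans_le (hbd j).2) _
  · calc ∑ i, ‖(VandW m N v *ᵥ x) i‖ ^ 2
        ≤ Fintype.card (Fin (m * N)) * Fintype.card (Fin m) * ∑ j, ‖x j‖ ^ 2 :=
          sum_sq_norm_mulVec_le (norm_VandW_apply_le_one fun j => ⟨(hv j).le, (hbd j).2⟩) x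
      _ = (m : ℝ) ^ 2 * N * ∑ j, ‖x j‖ ^ 2 := by
          simp only [Fintype.card_fin, Nat.cast_mul]
          ring

/-- Corollary `corV`. -/
theorem stmt2 (m N : ℕ) (hm : 2 ≤ m) (hN : 1 ≤ N)
    (ν : ℝ) (hν0 : 0 < ν) (hν1 : ν ≤ 1)
    (v : Fin m → ℝ) (hinj : Function.Injective v)
    (hbd : ∀ j, ν ≤ v j ∧ v j ≤ 1) (x : Fin m → ℂ) :
    (Real.exp (-(1/2)) * (m:ℝ) ^ (-(((m:ℝ)-1)/2)) * pairProd m v)^2 * PsiFn N ν *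
        (∑ j, ‖x j‖^2)
      ≤ ∑ i, ‖(VandW m N v *ᵥ x) i‖^2
    ∧ ∑ i, ‖(VandW m N v *ᵥ x) i‖^2 ≤ (m:ℝ)^2 * (N:ℝ) * (∑ j, ‖x j‖^2) :=
  stmt2_general m N hm ν hν0 v hbd x
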